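/- For every odd natural number m, ∑_{n=0}^{m} binom(m, n) · 2^n · 4(2^{n+1} - 1) B_{n+1} / (n+1) = 0; equivalently, θ((1+2z)^m) = 0 where θ : ℝ[z] → ℝ is the linear map determined by θ(z^n) = 4(2^{n+1} - 1) B_{n+1} / (n+1). -/

import Mathlib

open Finset

section Aux

open PowerSeries

/-- Auxiliary power series `(rescale 4 B - rescale 2 B) * exp` over `ℚ`, where `B` is the
exponential generating function of the Bernoulli numbers. -/
private noncomputable def Pser : PowerSeries ℚ :=
  (rescale 4 (bernoulliPowerSeries ℚ) - rescale 2 (bernoulliPowerSeries ℚ)) * exp ℚ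

private lemma rescale_neg_one_Pser : rescale (-1 : ℚ) Pser = - Pser := by
  set e := exp ℚ with he
  set u := rescale (-1 : ℚ) e with hu
  have hue : e * u = 1 := by
    have h := exp_mul_exp_eq_exp_add (1 : ℚ) (-1)
    rw [rescale_one] at h
    norm_num at h
    rw [hu, he]
    first
      | exact h
      | (rw [h]; simp [rescale_zero, constantCoeff_exp])
  have hB : ∀ a : ℚ, rescale a (bernoulliPowerSeries ℚ) * (rescale a e - 1)
      = PowerSeries.C a * X := by
    intro a
    have h := congrArg (rescale a) (bernoulliPowerSeries_mul_exp_sub_one ℚ)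
    rw [map_mul, map_sub, map_one, rescale_X] at h
    exact h
  have h2 : rescale (2:ℚ) e = e * e := by
    have h := exp_mul_exp_eq_exp_add (1 : ℚ) 1
    rw [rescale_one] at h; norm_num at h; rw [h]
  have hm2 : rescale (-2:ℚ) e = u * u := by
    have h := exp_mul_exp_eq_exp_add (-1 : ℚ) (-1)
    norm_num at h; rw [← h]
  have h4 : rescale (4:ℚ) e = e * e * (e * e) := by
    have h := exp_mul_exp_eq_exp_add (2 : ℚ) 2
    norm_num at h; rw [← h, h2]
  have hm4 : rescale (-4:ℚ) e = u * u * (u * u) := by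
    have h := exp_mul_exp_eq_exp_add (-2 : ℚ) (-2)
    norm_num at h; rw [← h, hm2]
  have hB4 : rescale (4:ℚ) (bernoulliPowerSeries ℚ) * (e*e*(e*e) - 1) = 4 * X := by
    have h := hB 4; rw [h4] at h; rw [h]; simp only [map_ofNat]
  have hB2 : rescale (2:ℚ) (bernoulliPowerSeries ℚ) * (e*e - 1) = 2 * X := by
    have h := hB 2; rw [h2] at h; rw [h]; simp only [map_ofNat]
  have hBm4 : rescale (-4:ℚ) (bernoulliPowerSeries ℚ) * (u*u*(u*u) - 1) = -4 * X := by
    have h := hB (-4); rw [hm4] at h; rw [h]; simp only [map_neg, map_ofNat, neg_mul]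
  have hBm2 : rescale (-2:ℚ) (bernoulliPowerSeries ℚ) * (u*u - 1) = -2 * X := by
    have h := hB (-2); rw [hm2] at h; rw [h]; simp only [map_neg, map_ofNat, neg_mul]
  have hresc : rescale (-1:ℚ) Pser
      = (rescale (-4:ℚ) (bernoulliPowerSeries ℚ) - rescale (-2:ℚ) (bernoulliPowerSeries ℚ)) * u := by
    rw [Pser, map_mul, map_sub, rescale_rescale, rescale_rescale, hu]
    norm_num [he]
  have hM : ((e*e*(e*e) - 1) * (u*u*(u*u) - 1)) ≠ 0 := by
    apply mul_ne_zero
    · intro hc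
      have := congrArg (coeff 1) hc
      rw [← h4] at this
      simp [he, coeff_rescale, coeff_exp] at this
    · intro hc
      have := congrArg (coeff 1) hc
      rw [← hm4] at this
      simp [he, hu, coeff_rescale, coeff_exp] at this
  apply mul_left_cancel₀ hM
  rw [hresc, Pser]
  set B4 := rescale (4:ℚ) (bernoulliPowerSeries ℚ)
  set B2 := rescale (2:ℚ) (bernoulliPowerSeries ℚ)
  set Bm4 := rescale (-4:ℚ) (bernoulliPowerSeries ℚ)
  set Bm2 := rescale (-2:ℚ) (bernoulliPowerSeries ℚ)
  linear_combination
    ((e*e*(e*e) - 1) * u) * hBm4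
    - ((e*e*(e*e) - 1) * (u*u + 1) * u) * hBm2
    + ((u*u*(u*u) - 1) * e) * hB4
    - ((u*u*(u*u) - 1) * (e*e + 1) * e) * hB2
    + (2 * X * (1 - e*e) * (u*u - 1) * (u - e)) * hue

private lemma coeff_Pser_odd (m : ℕ) (hm : Odd m) : coeff (m + 1) Pser = 0 := by
  have h0 := congrArg (coeff (m + 1)) rescale_neg_one_Pser
  rw [coeff_rescale, map_neg, Even.neg_one_pow hm.add_one, one_mul] at h0
  linarith

private lemma key_rat (m : ℕ) (hm : Odd m) :
    (∑ n ∈ range (m + 1), (m.choose n : ℚ) * 2 ^ n *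
        (4 * (2 ^ (n + 1) - 1) * bernoulli (n + 1) / (n + 1))) = 0 := by
  have h := coeff_Pser_odd m hm
  have hco : coeff (m + 1) Pser
      = ∑ k ∈ range (m + 2),
          ((4 ^ k - 2 ^ k) * (bernoulli k / (Nat.factorial k))) * (1 / (Nat.factorial (m + 1 - k)) : ℚ) := by
    rw [Pser, coeff_mul, Finset.Nat.sum_antidiagonal_eq_sum_range_succ_mk]
    refine Finset.sum_congr rfl fun k _ => ?_
    rw [map_sub, coeff_rescale, coeff_rescale, coeff_exp, bernoulliPowerSeries, coeff_mk]
    simp only [Algebra.algebraMap_self_apply]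
    ring
  calc (∑ n ∈ range (m + 1), (m.choose n : ℚ) * 2 ^ n *
        (4 * (2 ^ (n + 1) - 1) * bernoulli (n + 1) / (n + 1)))
      = 2 * (Nat.factorial m) * coeff (m + 1) Pser := by
        rw [hco, Finset.mul_sum]
        conv_rhs => rw [Finset.sum_range_succ']
        have : 2 * ((Nat.factorial m : ℚ)) * (((4 ^ 0 - 2 ^ 0 : ℚ) * (bernoulli 0 / (Nat.factorial 0))) * (1 / (Nat.factorial (m + 1 - 0)) : ℚ)) = 0 := by
          norm_num
        rw [this, add_zero]
        refine Finset.sum_congr rfl fun n hn => ?_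
        have hnm : n ≤ m := Nat.lt_succ_iff.mp (Finset.mem_range.mp hn)
        have hms : m + 1 - (n + 1) = m - n := by omega
        rw [hms, Nat.cast_choose ℚ hnm, Nat.factorial_succ]
        have h1 : ((Nat.factorial n) : ℚ) ≠ 0 := Nat.cast_ne_zero.mpr (Nat.factorial_ne_zero n)
        have h2 : ((Nat.factorial (m - n)) : ℚ) ≠ 0 := Nat.cast_ne_zero.mpr (Nat.factorial_ne_zero _)
        have h3 : ((n : ℚ) + 1) ≠ 0 := by positivity
        have h4 : (4:ℚ) ^ (n+1) = 2 ^ (n+1) * 2 ^ (n+1) := by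
          rw [show (4:ℚ) = 2*2 by norm_num, mul_pow]
        rw [h4]
        push_cast
        field_simp
        ring
    _ = 0 := by rw [h, mul_zero]

private lemma coeff_pow_one_add_two_X (m : ℕ) (n : ℕ) :
    ((1 + 2 * Polynomial.X : Polynomial ℝ) ^ m).coeff n = (m.choose n : ℝ) * 2 ^ n := by
  rw [add_comm, add_pow]
  simp only [Polynomial.finset_sum_coeff, mul_pow, one_pow, mul_one]
  have hterm : ∀ b : ℕ, ((2 : Polynomial ℝ) ^ b * Polynomial.X ^ b * ((m.choose b : ℕ) : Polynomial ℝ))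
      = Polynomial.C ((m.choose b : ℝ) * 2 ^ b) * Polynomial.X ^ b := by
    intro b
    rw [map_mul, map_pow, Polynomial.C_eq_natCast, map_ofNat]
    ring
  simp only [hterm, Polynomial.coeff_C_mul, Polynomial.coeff_X_pow, mul_ite, mul_one, mul_zero]
  rw [Finset.sum_ite_eq (Finset.range (m + 1)) n]
  by_cases hn : n ∈ Finset.range (m + 1)
  · simp [hn]
  · simp only [hn, if_false]
    rw [Nat.choose_eq_zero_of_lt (by simpa using Nat.lt_of_succ_le (Nat.succ_le_of_lt (by
      simpa [Finset.mem_range, not_lt] using hn)))]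
    simp

end Aux

/-- The linear map `θ : ℝ[z] → ℝ` determined by
`θ(z^n) = 4 (2^{n+1} - 1) B_{n+1} / (n+1)`, with `bernoulli` Mathlib's
Bernoulli numbers (convention `B_1 = -1/2`). -/
noncomputable def theta (p : Polynomial ℝ) : ℝ :=
  p.sum fun n a => a * (4 * (2 ^ (n + 1) - 1) * ((bernoulli (n + 1) : ℚ) : ℝ) / (n + 1))

theorem theta_one_add_two_z_pow_odd (m : ℕ) (hm : Odd m) :
    (∑ n ∈ range (m + 1), (m.choose n : ℝ) * 2 ^ n *
        (4 * (2 ^ (n + 1) - 1) * ((bernoulli (n + 1) : ℚ) : ℝ) / (n + 1))) = 0 ∧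
      theta ((1 + 2 * Polynomial.X) ^ m) = 0 := by
  have hq := key_rat m hm
  have hsum : (∑ n ∈ range (m + 1), (m.choose n : ℝ) * 2 ^ n *
        (4 * (2 ^ (n + 1) - 1) * ((bernoulli (n + 1) : ℚ) : ℝ) / (n + 1))) = 0 := by
    have hc : ((∑ n ∈ range (m + 1), (m.choose n : ℚ) * 2 ^ n *
        (4 * (2 ^ (n + 1) - 1) * bernoulli (n + 1) / (n + 1)) : ℚ) : ℝ) = 0 := by
      rw [hq]; norm_num
    rw [← hc]
    push_cast
    rfl
  refine ⟨hsum, ?_⟩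
  have hdeg : ((1 + 2 * Polynomial.X : Polynomial ℝ) ^ m).natDegree < m + 1 := by
    apply Nat.lt_succ_of_le
    refine le_trans (Polynomial.natDegree_pow_le) ?_
    have h1 : (1 + 2 * Polynomial.X : Polynomial ℝ).natDegree ≤ 1 := by
      refine le_trans (Polynomial.natDegree_add_le _ _) ?_
      simp only [Polynomial.natDegree_one, max_le_iff]
      constructor
      · omega
      · exact le_trans (Polynomial.natDegree_mul_le)
          (by simp [Polynomial.natDegree_X])
    calc m * (1 + 2 * Polynomial.X : Polynomial ℝ).natDegree ≤ m * 1 :=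
          Nat.mul_le_mul_left m h1
      _ = m := by omega
  rw [theta, Polynomial.sum_over_range' _ (fun n => by ring) (m + 1) hdeg]
  rw [← hsum]
  refine Finset.sum_congr rfl fun n _ => ?_
  rw [coeff_pow_one_add_two_X]
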